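/- arXiv:1606.07011 — 2 statements merged into one kernel-verified Lean document; each statement's English description precedes it below -/
import Mathlib

section
/- Let Ψ be the standard normal survival function. For any fixed real x, Ψ(u + x/u)/Ψ(u) → e^{-x} as u → ∞. -/
open Filter MeasureTheory

noncomputable def Psi (u : ℝ) : ℝ :=
  ∫ x in Set.Ioi u, (1 / Real.sqrt (2 * Real.pi)) * Real.exp (-x ^ 2 / 2)

open Set Real Topology

/-! The substitution `x = v + r / v` gives `v Ψ(v) = φ(v) ∫₀^∞ exp (-r - r² / (2v²)) dr` with `φ` the
Gaussian density, and the integral tends to `1` by dominated convergence. Hence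
`Ψ(f) / Ψ(g) ~ exp (-(f² - g²) / 2) · g / f` as `f, g → ∞`, and for `f = u + x / u`, `g = u` one has
`(f² - g²) / 2 → x` and `g / f → 1`. -/

theorem integral_Ioi_comp_add_left {E : Type*} [NormedAddCommGroup E] [NormedSpace ℝ E]
    (f : ℝ → E) (a c : ℝ) : ∫ x in Ioi a, f (c + x) = ∫ x in Ioi (c + a), f x := by
  rw [← (measurePreserving_add_left volume c).setIntegral_preimage_emb
    (MeasurableEquiv.addLeft c).measurableEmbedding f (Ioi (c + a))]
  simp

noncomputable def tailCorrection (v : ℝ) : ℝ :=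
  ∫ r in Ioi 0, exp (-r - r ^ 2 / (2 * v ^ 2))

theorem mul_Psi_eq (v : ℝ) (hv : 0 < v) :
    v * Psi v = 1 / √(2 * π) * exp (-v ^ 2 / 2) * tailCorrection v := by
  have hφ : ∀ r, 1 / √(2 * π) * exp (-(v + v⁻¹ * r) ^ 2 / 2)
      = 1 / √(2 * π) * exp (-v ^ 2 / 2) * exp (-r - r ^ 2 / (2 * v ^ 2)) := by
    intro r
    rw [mul_assoc, ← exp_add]
    congr 2
    field_simp
    ring
  have := integral_comp_mul_left_Ioi
    (fun y => 1 / √(2 * π) * exp (-(v + y) ^ 2 / 2)) 0 (inv_pos.2 hv)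
  simp only [hφ, integral_const_mul, mul_zero, inv_inv, smul_eq_mul,
    integral_Ioi_comp_add_left (fun x => 1 / √(2 * π) * exp (-x ^ 2 / 2)), add_zero] at this
  rw [Psi, tailCorrection, this, integral_const_mul]

theorem norm_exp_neg_sub_le (v r : ℝ) : ‖exp (-r - r ^ 2 / (2 * v ^ 2))‖ ≤ exp (-r) := by
  rw [norm_of_nonneg (exp_pos _).le, exp_le_exp]
  have : 0 ≤ r ^ 2 / (2 * v ^ 2) := by positivity
  linarith

theorem tendsto_tailCorrection_atTop : Tendsto tailCorrection atTop (𝓝 1) := by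
  rw [← integral_exp_neg_Ioi_zero]
  refine tendsto_integral_filter_of_dominated_convergence _
    (.of_forall fun v => (by fun_prop : Continuous _).aestronglyMeasurable)
    (.of_forall fun v => .of_forall fun r => norm_exp_neg_sub_le v r)
    (integrableOn_exp_neg_Ioi 0) (.of_forall fun r => ?_)
  have : Tendsto (fun v : ℝ => r ^ 2 / (2 * v ^ 2)) atTop (𝓝 0) :=
    tendsto_const_nhds.div_atTop ((tendsto_pow_atTop two_ne_zero).const_mul_atTop two_pos)
  simpa using (tendsto_const_nhds.sub this).rexp

theorem Psi_div_Psi {u v : ℝ} (hu : 0 < u) (hv : 0 < v) (hT : 0 < tailCorrection u) :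
    Psi v / Psi u =
      exp (-((v ^ 2 - u ^ 2) / 2)) * (u / v) * (tailCorrection v / tailCorrection u) := by
  have hPsi : ∀ w, 0 < w → Psi w = 1 / √(2 * π) * exp (-w ^ 2 / 2) * tailCorrection w / w :=
    fun w hw => by rw [← mul_Psi_eq w hw, mul_div_cancel_left₀ _ hw.ne']
  rw [hPsi u hu, hPsi v hv, show -((v ^ 2 - u ^ 2) / 2) = -v ^ 2 / 2 - -u ^ 2 / 2 by ring,
    exp_sub]
  field_simp

theorem tendsto_Psi_div_Psi {α : Type*} {l : Filter α} {f g : α → ℝ} {c : ℝ}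
    (hf : Tendsto f l atTop) (hg : Tendsto g l atTop)
    (hc : Tendsto (fun t => (f t ^ 2 - g t ^ 2) / 2) l (𝓝 c))
    (hgf : Tendsto (fun t => g t / f t) l (𝓝 1)) :
    Tendsto (fun t => Psi (f t) / Psi (g t)) l (𝓝 (exp (-c))) := by
  have hT := tendsto_tailCorrection_atTop
  have hlim := (hc.neg.rexp.mul hgf).mul ((hT.comp hf).div (hT.comp hg) one_ne_zero)
  rw [mul_one, div_one, mul_one] at hlim
  refine hlim.congr' ?_
  filter_upwards [hf.eventually_gt_atTop 0, hg.eventually_gt_atTop 0,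
    hg.eventually (hT.eventually (lt_mem_nhds one_pos))] with t hft hgt hTg
  exact (Psi_div_Psi hgt hft hTg).symm

theorem psi_shift_ratio (x : ℝ) :
    Tendsto (fun u : ℝ => Psi (u + x / u) / Psi u) atTop (nhds (Real.exp (-x))) := by
  have hsq : Tendsto (fun u : ℝ => (u ^ 2)⁻¹) atTop (𝓝 0) :=
    tendsto_inv_atTop_zero.comp (tendsto_pow_atTop two_ne_zero)
  refine tendsto_Psi_div_Psi (tendsto_id.atTop_add (tendsto_const_nhds.div_atTop tendsto_id))
    tendsto_id ?_ ?_
  · have : Tendsto (fun u : ℝ => x + x ^ 2 / 2 * (u ^ 2)⁻¹) atTop (𝓝 x) := by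
      simpa using (hsq.const_mul (x ^ 2 / 2)).const_add x
    refine this.congr' ?_
    filter_upwards [eventually_ne_atTop 0] with u hu
    field_simp
    ring
  · have : Tendsto (fun u : ℝ => (1 + x * (u ^ 2)⁻¹)⁻¹) atTop (𝓝 1) := by
      simpa using ((hsq.const_mul x).const_add 1).inv₀ (by simp)
    refine this.congr' ?_
    filter_upwards [eventually_ne_atTop 0] with u hu
    rw [show u + x / u = u * (1 + x * (u ^ 2)⁻¹) by field_simp, div_mul_cancel_left₀ hu]
end

section
/- Fix γ > 0, c > 0, q > 1, and ς > 0. Then u^{2/ς} · Ψ(u·(1 + c·u^{−2}(ln u)^q)) = o(Ψ(u)) as u → ∞, where Ψ is the standard normal survival function. -/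
/-! Write `φ(x) = exp(-x²/2)/√(2π)`. Comparing the tail integral with `∫ x φ(x) / v` over
`(v, ∞)` and with its value on `(u, u + 1/u]` gives the Mills-ratio bounds
`e⁻² φ(u)/u ≤ Ψ(u)` for `u ≥ 1` and `Ψ(v) ≤ φ(v)/v` for `v > 0`, hence
`Ψ(v) ≤ e² exp(-(v² - u²)/2) Ψ(u)` for `1 ≤ u ≤ v`. For `v = u(1 + c u⁻² (ln u)^q)` we
have `v² - u² ≥ 2c (ln u)^q`, and `exp(-c (ln u)^q)` beats the factor
`u^(2/ς) = exp((2/ς) ln u)` because `q > 1`. -/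

open Filter MeasureTheory Asymptotics

open Set Real Topology

lemma integrable_exp_neg_sq_div_two : Integrable fun x : ℝ => exp (-x ^ 2 / 2) := by
  simpa [neg_div, div_eq_inv_mul] using integrable_exp_neg_mul_sq (b := 1 / 2) (by norm_num)

lemma integrable_mul_exp_neg_sq_div_two : Integrable fun x : ℝ => x * exp (-x ^ 2 / 2) := by
  simpa [neg_div, div_eq_inv_mul] using integrable_mul_exp_neg_mul_sq (b := 1 / 2) (by norm_num)

lemma hasDerivAt_exp_neg_sq_div_two (x : ℝ) :
    HasDerivAt (fun x : ℝ => exp (-x ^ 2 / 2)) (-(x * exp (-x ^ 2 / 2))) x := by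
  have h : HasDerivAt (fun x : ℝ => -x ^ 2 / 2) (-x) x :=
    ((hasDerivAt_pow 2 x).neg.div_const 2).congr_deriv (by simp; ring)
  simpa [mul_comm] using h.exp

lemma tendsto_exp_neg_sq_div_two : Tendsto (fun x : ℝ => exp (-x ^ 2 / 2)) atTop (𝓝 0) :=
  tendsto_exp_atBot.comp <|
    (tendsto_neg_atTop_atBot.comp (tendsto_pow_atTop two_ne_zero)).atBot_div_const two_pos

lemma integral_Ioi_mul_exp_neg_sq_div_two (v : ℝ) :
    ∫ x in Ioi v, x * exp (-x ^ 2 / 2) = exp (-v ^ 2 / 2) := by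
  have := integral_Ioi_of_hasDerivAt_of_tendsto' (a := v)
    (fun x _ => hasDerivAt_exp_neg_sq_div_two x) integrable_mul_exp_neg_sq_div_two.neg.integrableOn
    tendsto_exp_neg_sq_div_two
  rw [integral_neg] at this
  linarith

lemma setIntegral_exp_neg_sq_div_two_le {v : ℝ} (hv : 0 < v) :
    ∫ x in Ioi v, exp (-x ^ 2 / 2) ≤ exp (-v ^ 2 / 2) / v := by
  calc ∫ x in Ioi v, exp (-x ^ 2 / 2)
      ≤ ∫ x in Ioi v, x * exp (-x ^ 2 / 2) / v := by
        refine setIntegral_mono_on integrable_exp_neg_sq_div_two.integrableOn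
          (integrable_mul_exp_neg_sq_div_two.div_const v).integrableOn measurableSet_Ioi
          fun x hx => ?_
        rw [mul_div_right_comm]
        exact le_mul_of_one_le_left (exp_pos _).le ((one_le_div hv).2 (le_of_lt hx))
    _ = exp (-v ^ 2 / 2) / v := by
        rw [integral_div, integral_Ioi_mul_exp_neg_sq_div_two]

lemma exp_neg_sq_div_two_sub_two_div_le_setIntegral {u : ℝ} (hu : 1 ≤ u) :
    exp (-u ^ 2 / 2 - 2) / u ≤ ∫ x in Ioi u, exp (-x ^ 2 / 2) := by
  have hu0 : 0 < u := one_pos.trans_le hu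
  have hvol : volume.real (Ioc u (u + u⁻¹)) = u⁻¹ := by
    simp [Real.volume_real_Ioc, (inv_pos.2 hu0).le]
  calc exp (-u ^ 2 / 2 - 2) / u
      ≤ exp (-(u + u⁻¹) ^ 2 / 2) * volume.real (Ioc u (u + u⁻¹)) := by
        rw [hvol, div_eq_mul_inv]
        gcongr
        have : u⁻¹ ^ 2 ≤ 1 := pow_le_one₀ (inv_nonneg.2 hu0.le) (inv_le_one_of_one_le₀ hu)
        have : u * u⁻¹ = 1 := mul_inv_cancel₀ hu0.ne'
        nlinarith
    _ ≤ ∫ x in Ioc u (u + u⁻¹), exp (-x ^ 2 / 2) :=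
        setIntegral_ge_of_const_le_real measurableSet_Ioc (by simp)
          (fun x hx => exp_le_exp.2 (by nlinarith [hx.1, hx.2]))
          integrable_exp_neg_sq_div_two.integrableOn
    _ ≤ ∫ x in Ioi u, exp (-x ^ 2 / 2) :=
        setIntegral_mono_set integrable_exp_neg_sq_div_two.integrableOn
          (ae_of_all _ fun x => (exp_pos _).le) Ioc_subset_Ioi_self.eventuallyLE

lemma Psi_eq (u : ℝ) : Psi u = (√(2 * π))⁻¹ * ∫ x in Ioi u, exp (-x ^ 2 / 2) := by
  rw [Psi, ← integral_const_mul, one_div]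

lemma Psi_nonneg (u : ℝ) : 0 ≤ Psi u := by
  rw [Psi_eq]
  exact mul_nonneg (by positivity) (setIntegral_nonneg measurableSet_Ioi fun x _ => (exp_pos _).le)

lemma Psi_le_exp_mul_Psi {u v : ℝ} (hu : 1 ≤ u) (huv : u ≤ v) :
    Psi v ≤ exp (2 - (v ^ 2 - u ^ 2) / 2) * Psi u := by
  have hu0 : 0 < u := one_pos.trans_le hu
  rw [Psi_eq, Psi_eq, mul_left_comm]
  gcongr
  calc ∫ x in Ioi v, exp (-x ^ 2 / 2)
      ≤ exp (-v ^ 2 / 2) / v := setIntegral_exp_neg_sq_div_two_le (hu0.trans_le huv)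
    _ ≤ exp (-v ^ 2 / 2) / u := by gcongr
    _ = exp (2 - (v ^ 2 - u ^ 2) / 2) * (exp (-u ^ 2 / 2 - 2) / u) := by
        rw [mul_div_assoc', ← exp_add]
        ring_nf
    _ ≤ exp (2 - (v ^ 2 - u ^ 2) / 2) * ∫ x in Ioi u, exp (-x ^ 2 / 2) := by
        gcongr
        exact exp_neg_sq_div_two_sub_two_div_le_setIntegral hu

lemma Psi_mul_one_add_le {a u : ℝ} (ha : 0 ≤ a) (hu : 1 ≤ u) :
    Psi (u * (1 + a * u ^ (-2 : ℝ))) ≤ exp 2 * exp (-a) * Psi u := by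
  have hu0 : 0 < u := one_pos.trans_le hu
  have hδ : 0 ≤ a * u ^ (-2 : ℝ) := by positivity
  have hsq : (u * (1 + a * u ^ (-2 : ℝ))) ^ 2 - u ^ 2 = 2 * a + a * (a * u ^ (-2 : ℝ)) := by
    rw [rpow_neg hu0.le, rpow_two]
    field_simp
    ring
  calc Psi (u * (1 + a * u ^ (-2 : ℝ)))
      ≤ exp (2 - ((u * (1 + a * u ^ (-2 : ℝ))) ^ 2 - u ^ 2) / 2) * Psi u :=
        Psi_le_exp_mul_Psi hu (le_mul_of_one_le_right hu0.le (by linarith))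
    _ ≤ exp 2 * exp (-a) * Psi u := by
        rw [← exp_add]
        gcongr
        · exact Psi_nonneg u
        · nlinarith

lemma tendsto_rpow_mul_exp_neg_mul_log_rpow (a : ℝ) {c q : ℝ} (hc : 0 < c) (hq : 1 < q) :
    Tendsto (fun u : ℝ => u ^ a * exp (-(c * log u ^ q))) atTop (𝓝 0) := by
  have hL : Tendsto (fun L : ℝ => L * (a - c * L ^ (q - 1))) atTop atBot :=
    tendsto_id.atTop_mul_atBot₀ <| tendsto_atBot_add_const_left _ a <|
      tendsto_neg_atTop_atBot.comp <| (tendsto_rpow_atTop (by linarith)).const_mul_atTop hc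
  refine (tendsto_exp_atBot.comp (hL.comp tendsto_log_atTop)).congr' ?_
  filter_upwards [eventually_gt_atTop 1] with u hu
  have hlog : 0 < log u := log_pos hu
  simp only [Function.comp_apply]
  rw [rpow_def_of_pos (one_pos.trans hu), ← exp_add, rpow_sub hlog, rpow_one]
  field_simp
  ring_nf

theorem psi_littleo_general (c q ς : ℝ) (hc : 0 < c) (hq : 1 < q) :
    (fun u : ℝ => u ^ (2 / ς) * Psi (u * (1 + c * u ^ (-2 : ℝ) * Real.log u ^ q)))
      =o[atTop] Psi := by
  have hsmall : (fun u : ℝ => u ^ (2 / ς) * exp (-(c * log u ^ q)) * Psi u) =o[atTop] Psi := by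
    simpa using ((isLittleO_one_iff ℝ).2
      (tendsto_rpow_mul_exp_neg_mul_log_rpow (2 / ς) hc hq)).mul_isBigO (isBigO_refl Psi atTop)
  refine IsBigO.trans_isLittleO (IsBigO.of_bound (exp 2) ?_) hsmall
  filter_upwards [eventually_ge_atTop 1] with u hu
  have hLq : 0 ≤ c * log u ^ q := mul_nonneg hc.le (rpow_nonneg (log_nonneg hu) q)
  have hpow : 0 ≤ u ^ (2 / ς) := rpow_nonneg (zero_le_one.trans hu) _
  rw [norm_of_nonneg (mul_nonneg hpow (Psi_nonneg _)),
    norm_of_nonneg (mul_nonneg (mul_nonneg hpow (exp_pos _).le) (Psi_nonneg u))]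
  calc u ^ (2 / ς) * Psi (u * (1 + c * u ^ (-2 : ℝ) * log u ^ q))
      ≤ u ^ (2 / ς) * (exp 2 * exp (-(c * log u ^ q)) * Psi u) := by
        rw [mul_right_comm c]
        gcongr
        exact Psi_mul_one_add_le hLq hu
    _ = exp 2 * (u ^ (2 / ς) * exp (-(c * log u ^ q)) * Psi u) := by ring

theorem psi_littleo (γ c q ς : ℝ) (hγ : 0 < γ) (hc : 0 < c) (hq : 1 < q) (hς : 0 < ς) :
    (fun u : ℝ => u ^ (2 / ς) * Psi (u * (1 + c * u ^ (-2 : ℝ) * Real.log u ^ q)))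
      =o[atTop] Psi :=
  psi_littleo_general c q ς hc hq
end
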